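/- (Bregman divergence coincides with the Kullback–Leibler divergence) For any two strictly positive probability vectors p and q on S, it holds that ψ(p) + Σ_{x∈S} q(x) log q(x) − Σ_{x∈S⁺} θ_p(x) η_q(x) = Σ_{x∈S} q(x) log (q(x)/p(x)). -/
import Mathlib


local instance {S : Type*} [PartialOrder S] [DecidableEq S]
    [DecidableRel ((· ≤ ·) : S → S → Prop)] :
    DecidableRel ((· < ·) : S → S → Prop) :=
  fun a b => decidable_of_iff (a ≤ b ∧ a ≠ b) lt_iff_le_and_ne.symm

/-- `θ_p(x) = Σ_{s∈S} μ(s,x) log p(s)`. -/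
noncomputable def thetaP {S : Type*} [Fintype S] (mu : S → S → ℤ) (p : S → ℝ) (x : S) : ℝ :=
  ∑ s : S, (mu s x : ℝ) * Real.log (p s)

/-- `η_p(x) = Σ_{s ≥ x} p(s)`. -/
noncomputable def etaP {S : Type*} [Fintype S] [PartialOrder S]
    [DecidableRel ((· ≤ ·) : S → S → Prop)] (p : S → ℝ) (x : S) : ℝ :=
  ∑ s ∈ Finset.univ.filter (fun s => x ≤ s), p s

/-- Key Möbius identity: `Σ_{x ≤ t} μ(s,x) = δ_{s,t}`. -/
lemma mob_sum {S : Type*} [Fintype S] [PartialOrder S]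
    [DecidableEq S] [DecidableRel ((· ≤ ·) : S → S → Prop)]
    (mu : S → S → ℤ)
    (hmu_self : ∀ x : S, mu x x = 1)
    (hmu_lt : ∀ x y : S, x < y →
      mu x y = -∑ s ∈ Finset.univ.filter (fun s => x ≤ s ∧ s < y), mu x s)
    (hmu_nle : ∀ x y : S, ¬ x ≤ y → mu x y = 0) (s t : S) :
    (∑ x ∈ Finset.univ.filter (fun x => x ≤ t), mu s x) = if s = t then 1 else 0 := by
  by_cases hst : s ≤ t
  · have hsplit : (∑ x ∈ Finset.univ.filter (fun x => x ≤ t), mu s x)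
        = ∑ x ∈ Finset.univ.filter (fun x => s ≤ x ∧ x ≤ t), mu s x := by
      rw [← Finset.sum_filter_add_sum_filter_not (Finset.univ.filter (fun x => x ≤ t))
        (fun x => s ≤ x)]
      have h0 : (∑ x ∈ (Finset.univ.filter (fun x => x ≤ t)).filter (fun x => ¬ s ≤ x),
          mu s x) = 0 := by
        apply Finset.sum_eq_zero
        intro x hx
        simp only [Finset.mem_filter] at hx
        exact hmu_nle s x hx.2
      rw [h0, add_zero]
      congr 1
      ext x
      simp only [Finset.mem_filter, Finset.mem_univ, true_and]
      tauto
    rw [hsplit]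
    rcases eq_or_lt_of_le hst with rfl | hlt
    · rw [if_pos rfl]
      have : Finset.univ.filter (fun x => s ≤ x ∧ x ≤ s) = {s} := by
        ext x
        simp only [Finset.mem_filter, Finset.mem_univ, true_and, Finset.mem_singleton]
        constructor
        · rintro ⟨h1, h2⟩; exact le_antisymm h2 h1
        · rintro rfl; exact ⟨le_rfl, le_rfl⟩
      rw [this, Finset.sum_singleton, hmu_self]
    · rw [if_neg (ne_of_lt hlt)]
      have hmem : t ∈ Finset.univ.filter (fun x => s ≤ x ∧ x ≤ t) := by
        simp [hst]
      rw [← Finset.add_sum_erase _ _ hmem]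
      have herase : (Finset.univ.filter (fun x => s ≤ x ∧ x ≤ t)).erase t
          = Finset.univ.filter (fun x => s ≤ x ∧ x < t) := by
        ext x
        simp only [Finset.mem_erase, Finset.mem_filter, Finset.mem_univ, true_and]
        constructor
        · rintro ⟨hne, h1, h2⟩; exact ⟨h1, lt_of_le_of_ne h2 hne⟩
        · rintro ⟨h1, h2⟩; exact ⟨ne_of_lt h2, h1, le_of_lt h2⟩
      rw [herase, hmu_lt s t hlt]
      ring
  · rw [if_neg (fun h => hst (le_of_eq h))]
    apply Finset.sum_eq_zero
    intro x hx
    simp only [Finset.mem_filter, Finset.mem_univ, true_and] at hx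
    exact hmu_nle s x (fun h => hst (le_trans h hx))

/-- (Bregman divergence = KL divergence) For any two strictly positive probability vectors
`p` and `q` on `S`:
`ψ(p) + Σ_{x∈S} q(x) log q(x) − Σ_{x∈S⁺} θ_p(x) η_q(x) = Σ_{x∈S} q(x) log (q(x)/p(x))`,
where `ψ(p) = −log p(⊥)`. -/
theorem bregman_eq_kl {S : Type*} [Fintype S] [PartialOrder S] [OrderBot S]
    [DecidableEq S] [DecidableRel ((· ≤ ·) : S → S → Prop)]
    (mu : S → S → ℤ)
    (hmu_self : ∀ x : S, mu x x = 1)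
    (hmu_lt : ∀ x y : S, x < y →
      mu x y = -∑ s ∈ Finset.univ.filter (fun s => x ≤ s ∧ s < y), mu x s)
    (hmu_nle : ∀ x y : S, ¬ x ≤ y → mu x y = 0)
    (p q : S → ℝ)
    (hp : ∀ x, p x ∈ Set.Ioo (0 : ℝ) 1) (hpsum : ∑ x : S, p x = 1)
    (hq : ∀ x, q x ∈ Set.Ioo (0 : ℝ) 1) (hqsum : ∑ x : S, q x = 1) :
    (-Real.log (p ⊥)) + (∑ x : S, q x * Real.log (q x))
        - ∑ x : {x : S // x ≠ ⊥}, thetaP mu p (x : S) * etaP q (x : S)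
      = ∑ x : S, q x * Real.log (q x / p x) := by
  -- full sum over all x of θ η equals Σ q log p
  have hfull : (∑ x : S, thetaP mu p x * etaP q x) = ∑ s : S, q s * Real.log (p s) := by
    have expand : ∀ x : S, thetaP mu p x * etaP q x
        = ∑ s : S, ∑ t : S, (mu s x : ℝ) * Real.log (p s) * (if x ≤ t then q t else 0) := by
      intro x
      rw [thetaP, etaP, Finset.sum_filter, Finset.sum_mul_sum]
    simp_rw [expand]
    rw [Finset.sum_comm]
    have : ∀ s : S, (∑ x : S, ∑ t : S, (mu s x : ℝ) * Real.log (p s) * (if x ≤ t then q t else 0))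
        = q s * Real.log (p s) := by
      intro s
      rw [Finset.sum_comm]
      have step : ∀ t : S, (∑ x : S, (mu s x : ℝ) * Real.log (p s) * (if x ≤ t then q t else 0))
          = (if s = t then 1 else 0) * Real.log (p s) * q t := by
        intro t
        have : (∑ x : S, (mu s x : ℝ) * Real.log (p s) * (if x ≤ t then q t else 0))
            = (∑ x ∈ Finset.univ.filter (fun x => x ≤ t), (mu s x : ℝ)) * Real.log (p s) * q t := by
          rw [Finset.sum_filter, Finset.sum_mul, Finset.sum_mul]
          apply Finset.sum_congr rfl
          intro x _
          by_cases h : x ≤ t <;> simp [h] <;> ring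
        rw [this]
        norm_cast
        rw [mob_sum mu hmu_self hmu_lt hmu_nle s t]
        push_cast
        ring
      simp_rw [step]
      simp only [ite_mul, one_mul, zero_mul, Finset.sum_ite_eq, Finset.mem_univ, if_true]
      ring
    simp_rw [this]
  -- the subtype sum equals full sum minus bottom term
  have hbot_theta : thetaP mu p ⊥ = Real.log (p ⊥) := by
    rw [thetaP]
    rw [Fintype.sum_eq_single ⊥]
    · rw [hmu_self]; push_cast; ring
    · intro x hx
      rw [hmu_nle x ⊥ (fun h => hx (le_antisymm h bot_le))]
      simp
  have hbot_eta : etaP q ⊥ = 1 := by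
    rw [etaP]
    have : Finset.univ.filter (fun s : S => ⊥ ≤ s) = Finset.univ := by
      ext x; simp
    rw [this, hqsum]
  have hsub : (∑ x : {x : S // x ≠ ⊥}, thetaP mu p (x : S) * etaP q (x : S))
      = (∑ x : S, thetaP mu p x * etaP q x) - thetaP mu p ⊥ * etaP q ⊥ := by
    rw [← Finset.add_sum_erase Finset.univ (fun x => thetaP mu p x * etaP q x)
      (Finset.mem_univ ⊥)]
    rw [← Finset.sum_subtype (Finset.univ.erase ⊥)
      (fun x => by simp [Finset.mem_erase]) (fun x => thetaP mu p x * etaP q x)]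
    ring
  rw [hsub, hfull, hbot_theta, hbot_eta]
  have : ∀ x : S, q x * Real.log (q x / p x) = q x * Real.log (q x) - q x * Real.log (p x) := by
    intro x
    rw [Real.log_div (ne_of_gt (hq x).1) (ne_of_gt (hp x).1)]
    ring
  simp_rw [this]
  rw [Finset.sum_sub_distrib]
  ring
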